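/- Let P1 and P2 be probability measures on a common measurable space, let ε ≥ 0, δ ∈ [0,1], and let 0 ≤ ε' < ε. If P1 and P2 are (ε,δ)-close, then P1 and P2 are (ε',δ')-close, where δ' = 1 − (e^{ε'}+1)(1−δ)/(e^{ε}+1). -/
import Mathlib


open MeasureTheory Real
open scoped ENNReal

lemma close_weakening_real (a b δ p q : ℝ) (hb : 1 ≤ b) (hba : b < a)
    (h1 : p ≤ a * q + δ) (h2 : a * p ≤ a - 1 + q + δ) :
    p ≤ b * q + (1 - (b + 1) * (1 - δ) / (a + 1)) := by
  have ha1 : (1 : ℝ) < a := lt_of_le_of_lt hb hba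
  have hpos : (0 : ℝ) < a + 1 := by linarith
  have key : p * (a + 1) ≤ (b * q) * (a + 1) + ((b + 1) * δ + a - b) := by
    nlinarith [mul_nonneg (by nlinarith : (0:ℝ) ≤ a * b - 1) (by linarith : (0:ℝ) ≤ a * q + δ - p),
      mul_nonneg (by linarith : (0:ℝ) ≤ a - b) (by linarith : (0:ℝ) ≤ a - 1 + q + δ - a * p)]
  rw [← sub_nonneg]
  have : b * q + (1 - (b + 1) * (1 - δ) / (a + 1)) - p
      = ((b * q) * (a + 1) + ((b + 1) * δ + a - b) - p * (a + 1)) / (a + 1) := by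
    field_simp
    ring
  rw [this]
  exact div_nonneg (by linarith) (le_of_lt hpos)

lemma close_weakening_one_side {Ω : Type*} [MeasurableSpace Ω]
    (P1 P2 : Measure Ω) [IsProbabilityMeasure P1] [IsProbabilityMeasure P2]
    (ε ε' δ : ℝ) (hδ0 : 0 ≤ δ)
    (hε'0 : 0 ≤ ε') (hε'ε : ε' < ε)
    (h12 : ∀ A : Set Ω, MeasurableSet A →
      P1 A ≤ ENNReal.ofReal (exp ε) * P2 A + ENNReal.ofReal δ)
    (h21 : ∀ A : Set Ω, MeasurableSet A →
      P2 A ≤ ENNReal.ofReal (exp ε) * P1 A + ENNReal.ofReal δ) :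
    ∀ A : Set Ω, MeasurableSet A →
      P1 A ≤ ENNReal.ofReal (exp ε') * P2 A +
          ENNReal.ofReal (1 - (exp ε' + 1) * (1 - δ) / (exp ε + 1)) := by
  intro A hA
  set a := exp ε with ha_def
  set b := exp ε' with hb_def
  have hb1 : (1 : ℝ) ≤ b := one_le_exp hε'0
  have hba : b < a := exp_lt_exp.mpr hε'ε
  have ha0 : (0 : ℝ) ≤ a := le_of_lt (exp_pos ε)
  set p := (P1 A).toReal with hp_def
  set q := (P2 A).toReal with hq_def
  have hP1ne : P1 A ≠ ⊤ := measure_ne_top _ _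
  have hP2ne : P2 A ≠ ⊤ := measure_ne_top _ _
  have hq0 : 0 ≤ q := ENNReal.toReal_nonneg
  have hq1 : q ≤ 1 := by
    rw [hq_def]
    exact ENNReal.toReal_le_of_le_ofReal zero_le_one (by simpa using prob_le_one)
  have hp1 : p ≤ 1 := by
    rw [hp_def]
    exact ENNReal.toReal_le_of_le_ofReal zero_le_one (by simpa using prob_le_one)
  -- first inequality in reals
  have h1 : p ≤ a * q + δ := by
    have := h12 A hA
    have hrhs : ENNReal.ofReal a * P2 A + ENNReal.ofReal δ ≠ ⊤ := by
      apply ENNReal.add_ne_top.mpr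
      exact ⟨ENNReal.mul_ne_top ENNReal.ofReal_ne_top hP2ne, ENNReal.ofReal_ne_top⟩
    have := ENNReal.toReal_le_toReal hP1ne hrhs |>.mpr this
    rwa [ENNReal.toReal_add (ENNReal.mul_ne_top ENNReal.ofReal_ne_top hP2ne)
        ENNReal.ofReal_ne_top, ENNReal.toReal_mul, ENNReal.toReal_ofReal ha0,
        ENNReal.toReal_ofReal hδ0] at this
  -- second inequality from complements
  have hcomp1 : (P1 Aᶜ).toReal = 1 - p := by
    rw [prob_compl_eq_one_sub hA, ENNReal.toReal_sub_of_le (by simpa using prob_le_one)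
      ENNReal.one_ne_top, ENNReal.toReal_one]
  have hcomp2 : (P2 Aᶜ).toReal = 1 - q := by
    rw [prob_compl_eq_one_sub hA, ENNReal.toReal_sub_of_le (by simpa using prob_le_one)
      ENNReal.one_ne_top, ENNReal.toReal_one]
  have h2 : a * p ≤ a - 1 + q + δ := by
    have := h21 Aᶜ hA.compl
    have hP1cne : P1 Aᶜ ≠ ⊤ := measure_ne_top _ _
    have hP2cne : P2 Aᶜ ≠ ⊤ := measure_ne_top _ _
    have hrhs : ENNReal.ofReal a * P1 Aᶜ + ENNReal.ofReal δ ≠ ⊤ := by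
      apply ENNReal.add_ne_top.mpr
      exact ⟨ENNReal.mul_ne_top ENNReal.ofReal_ne_top hP1cne, ENNReal.ofReal_ne_top⟩
    have := ENNReal.toReal_le_toReal hP2cne hrhs |>.mpr this
    rw [ENNReal.toReal_add (ENNReal.mul_ne_top ENNReal.ofReal_ne_top hP1cne)
        ENNReal.ofReal_ne_top, ENNReal.toReal_mul, ENNReal.toReal_ofReal ha0,
        ENNReal.toReal_ofReal hδ0, hcomp1, hcomp2] at this
    linarith
  have hmain : p ≤ b * q + (1 - (b + 1) * (1 - δ) / (a + 1)) :=
    close_weakening_real a b δ p q hb1 hba h1 h2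
  calc P1 A = ENNReal.ofReal p := (ENNReal.ofReal_toReal hP1ne).symm
    _ ≤ ENNReal.ofReal (b * q + (1 - (b + 1) * (1 - δ) / (a + 1))) :=
        ENNReal.ofReal_le_ofReal hmain
    _ ≤ ENNReal.ofReal (b * q) + ENNReal.ofReal (1 - (b + 1) * (1 - δ) / (a + 1)) :=
        ENNReal.ofReal_add_le
    _ = ENNReal.ofReal b * P2 A + ENNReal.ofReal (1 - (b + 1) * (1 - δ) / (a + 1)) := by
        rw [ENNReal.ofReal_mul (by linarith), hq_def, ENNReal.ofReal_toReal hP2ne]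

/-- If probability measures `P1` and `P2` are `(ε,δ)`-close, then for any `0 ≤ ε' < ε`
they are also `(ε',δ')`-close, where `δ' = 1 − (e^{ε'}+1)(1−δ)/(e^{ε}+1)`. -/
theorem close_weakening {Ω : Type*} [MeasurableSpace Ω]
    (P1 P2 : Measure Ω) [IsProbabilityMeasure P1] [IsProbabilityMeasure P2]
    (ε ε' δ : ℝ) (hε : 0 ≤ ε) (hδ0 : 0 ≤ δ) (hδ1 : δ ≤ 1)
    (hε'0 : 0 ≤ ε') (hε'ε : ε' < ε)
    (h12 : ∀ A : Set Ω, MeasurableSet A →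
      P1 A ≤ ENNReal.ofReal (exp ε) * P2 A + ENNReal.ofReal δ)
    (h21 : ∀ A : Set Ω, MeasurableSet A →
      P2 A ≤ ENNReal.ofReal (exp ε) * P1 A + ENNReal.ofReal δ) :
    ∀ A : Set Ω, MeasurableSet A →
      P1 A ≤ ENNReal.ofReal (exp ε') * P2 A +
          ENNReal.ofReal (1 - (exp ε' + 1) * (1 - δ) / (exp ε + 1)) ∧
      P2 A ≤ ENNReal.ofReal (exp ε') * P1 A +
          ENNReal.ofReal (1 - (exp ε' + 1) * (1 - δ) / (exp ε + 1)) := by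
  intro A hA
  exact ⟨close_weakening_one_side P1 P2 ε ε' δ hδ0 hε'0 hε'ε h12 h21 A hA,
    close_weakening_one_side P2 P1 ε ε' δ hδ0 hε'0 hε'ε h21 h12 A hA⟩
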